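/- arXiv:1512.04972 — 3 statements merged into one kernel-verified Lean document; each statement's English description precedes it below -/
import Mathlib

section
/- Let G be a simple graph on vertex set Fin n with adjacency matrix A, let τ be the least eigenvalue of A, suppose the edge set of G is partitioned into bars B and struts S (no cables), and let p_1,…,p_n be the rows of an n×d matrix P whose columns form an orthonormal basis of the τ-eigenspace of A (PᵀP = I_d, AP = τP, and every v with Av = τv lies in the column space of P). Then the following are equivalent: (i) the least eigenvalue framework is universally completable, i.e., for every m and every q : Fin n → ℝ^m with ⟨q_i,q_i⟩ = ⟨p_i,p_i⟩ for all i, ⟨q_i,q_j⟩ = ⟨p_i,p_j⟩ for ij ∈ B, and ⟨q_i,q_j⟩ ≤ ⟨p_i,p_j⟩ for ij ∈ S, one has Gram(q) = Gram(p); (ii) the matrix A − τI has the Strong Arnold Property: for every n×n real symmetric matrix X, if X_{ij} = 0 whenever i = j or i is adjacent to j, and (A − τI)·X = 0, then X = 0. -/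
/-!
Write `M = A - τ I ⪰ 0`, so `M P = 0`. If `q` satisfies the framework constraints, then
`X = Gram(q) - Gram(p)` has zero diagonal and is `≤ 0` on edges, hence `tr (M X) = tr (A X) ≤ 0`;
but also `tr (M X) = tr (M Gram(q)) ≥ 0`. Equality forces `M q = 0` (so `M X = 0`) and `X = 0`
on edges, and the Strong Arnold Property gives `X = 0`.

Conversely, if `X` is a nonzero witness against the Strong Arnold Property, its columns are
`τ`-eigenvectors, so `X = P R Pᵀ` with `R = Pᵀ X P` symmetric. For small `ε > 0` the matrix
`1 + ε R` is positive semidefinite, say `Cᵀ C`, and the rows of `P Cᵀ` have Gram matrix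
`Gram(p) + ε X`: a configuration meeting every constraint with a different Gram matrix.
-/

open Matrix

def Matrix.HasStrongArnoldProperty {V R : Type*} [Fintype V] [Semiring R] (M : Matrix V V R)
    (G : SimpleGraph V) : Prop :=
  ∀ X : Matrix V V R, X.IsSymm → (∀ i j, (i = j ∨ G.Adj i j) → X i j = 0) → M * X = 0 → X = 0

def IsUniversallyCompletable {V κ : Type*} [Fintype κ] (B S : V → V → Prop)
    (P : Matrix V κ ℝ) : Prop :=
  ∀ (m : ℕ) (q : V → Fin m → ℝ),
    (∀ i, q i ⬝ᵥ q i = P i ⬝ᵥ P i) →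
    (∀ i j, B i j → q i ⬝ᵥ q j = P i ⬝ᵥ P j) →
    (∀ i j, S i j → q i ⬝ᵥ q j ≤ P i ⬝ᵥ P j) →
    ∀ i j, q i ⬝ᵥ q j = P i ⬝ᵥ P j

namespace Matrix

variable {ι κ η : Type*} [Fintype ι] [Fintype κ]

omit [Fintype ι] in
lemma mul_transpose_apply {R : Type*} [CommSemiring R] (A B : Matrix ι κ R) (i j : ι) :
    (A * Bᵀ) i j = A i ⬝ᵥ B j := by
  simp [mul_apply, dotProduct]

lemma PosSemidef.exists_eq_transpose_mul_self {A : Matrix ι ι ℝ} (hA : A.PosSemidef) :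
    ∃ B : Matrix ι ι ℝ, A = Bᵀ * B := by
  classical
  open scoped MatrixOrder in
  obtain ⟨B, hB⟩ := CStarAlgebra.nonneg_iff_eq_star_mul_self.mp hA.nonneg
  exact ⟨B, by rw [hB, star_eq_conjTranspose, conjTranspose_eq_transpose_of_trivial]⟩

lemma PosSemidef.trace_mul_mul_transpose_nonneg {M : Matrix ι ι ℝ} (hM : M.PosSemidef)
    (Q : Matrix ι κ ℝ) : 0 ≤ trace (M * (Q * Qᵀ)) := by
  have := (hM.conjTranspose_mul_mul_same Q).trace_nonneg
  rwa [conjTranspose_eq_transpose_of_trivial, trace_mul_cycle, trace_mul_comm] at this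

lemma PosSemidef.mul_eq_zero_of_trace_mul_mul_transpose_eq_zero {M : Matrix ι ι ℝ}
    (hM : M.PosSemidef) {Q : Matrix ι κ ℝ} (h : trace (M * (Q * Qᵀ)) = 0) : M * Q = 0 := by
  obtain ⟨B, rfl⟩ := hM.exists_eq_transpose_mul_self
  have hBQ : B * Q = 0 := by
    rw [← trace_conjTranspose_mul_self_eq_zero_iff, conjTranspose_eq_transpose_of_trivial]
    rw [← h, transpose_mul, Matrix.mul_assoc, trace_mul_comm]
    simp only [Matrix.mul_assoc]
  rw [Matrix.mul_assoc, hBQ, Matrix.mul_zero]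

lemma IsHermitian.exists_pos_posSemidef_one_add_smul [DecidableEq ι] {R : Matrix ι ι ℝ}
    (hR : R.IsHermitian) : ∃ ε : ℝ, 0 < ε ∧ (1 + ε • R).PosSemidef := by
  set c := ∑ i, |hR.eigenvalues i|
  have hc : 0 ≤ c := Finset.sum_nonneg fun i _ => abs_nonneg _
  refine ⟨(1 + c)⁻¹, by positivity, ?_⟩
  set U := hR.eigenvectorUnitary
  have hconj : 1 + (1 + c)⁻¹ • R =
      U * diagonal (fun i => 1 + (1 + c)⁻¹ * hR.eigenvalues i) * star (U : Matrix ι ι ℝ) := by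
    conv_lhs => rw [hR.spectral_theorem]
    rw [← map_one (Unitary.conjStarAlgAut ℝ (Matrix ι ι ℝ) U), ← map_smul, ← map_add,
      Unitary.conjStarAlgAut_apply]
    congr 2
    ext i j
    by_cases h : i = j <;> simp [h]
  rw [hconj, Unitary.isUnit_coe.posSemidef_star_right_conjugate_iff, posSemidef_diagonal_iff]
  intro i
  have hi : |hR.eigenvalues i| ≤ c :=
    Finset.single_le_sum (f := fun i => |hR.eigenvalues i|) (fun i _ => abs_nonneg _)
      (Finset.mem_univ i)
  have : -1 ≤ hR.eigenvalues i / (1 + c) := by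
    rw [le_div_iff₀ (by positivity)]
    linarith [neg_abs_le (hR.eigenvalues i)]
  rw [← div_eq_inv_mul]
  linarith

lemma mul_transpose_mul_eq_of_forall_exists_mulVec_eq [DecidableEq κ] {P : Matrix ι κ ℝ}
    (hP : Pᵀ * P = 1) {X : Matrix ι η ℝ} (hX : ∀ j, ∃ w, P *ᵥ w = Xᵀ j) : P * Pᵀ * X = X := by
  choose w hw using hX
  have hPW : P * (of w)ᵀ = X := by
    ext i j
    simpa [mul_apply, mulVec, dotProduct] using congrFun (hw j) i
  rw [← hPW, Matrix.mul_assoc, ← Matrix.mul_assoc Pᵀ, hP, Matrix.one_mul]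

lemma mul_mul_transpose_eq_of_mul_transpose_mul_eq {P : Matrix ι κ ℝ} {X : Matrix ι ι ℝ}
    (hX : Xᵀ = X) (hPX : P * Pᵀ * X = X) : P * (Pᵀ * X * P) * Pᵀ = X := by
  have hXP : X * (P * Pᵀ) = X := by
    simpa [transpose_mul, hX, Matrix.mul_assoc] using congrArg transpose hPX
  calc P * (Pᵀ * X * P) * Pᵀ = P * Pᵀ * X * (P * Pᵀ) := by simp only [Matrix.mul_assoc]
    _ = X := by rw [hPX, hXP]

lemma exists_mul_transpose_eq_add_smul [DecidableEq κ] {P : Matrix ι κ ℝ} {X : Matrix ι ι ℝ}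
    (hX : Xᵀ = X) (hPX : P * Pᵀ * X = X) :
    ∃ ε : ℝ, 0 < ε ∧ ∃ Q : Matrix ι κ ℝ, Q * Qᵀ = P * Pᵀ + ε • X := by
  have hR : (Pᵀ * X * P).IsHermitian := by
    rw [IsHermitian, conjTranspose_eq_transpose_of_trivial]
    simp [transpose_mul, hX, Matrix.mul_assoc]
  obtain ⟨ε, hε, hN⟩ := hR.exists_pos_posSemidef_one_add_smul
  obtain ⟨C, hC⟩ := hN.exists_eq_transpose_mul_self
  refine ⟨ε, hε, P * Cᵀ, ?_⟩
  calc P * Cᵀ * (P * Cᵀ)ᵀ = P * (Cᵀ * C) * Pᵀ := by simp [transpose_mul, Matrix.mul_assoc]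
    _ = P * Pᵀ + ε • X := by
      rw [← hC, Matrix.mul_add, Matrix.add_mul, Matrix.mul_one, Matrix.mul_smul,
        Matrix.smul_mul, mul_mul_transpose_eq_of_mul_transpose_mul_eq hX hPX]

end Matrix

namespace SimpleGraph

section AdjMatrix

variable {V R : Type*} (G : SimpleGraph V) [DecidableRel G.Adj] [Ring R] [PartialOrder R]
  {X : Matrix V V R}

lemma adjMatrix_mul_apply_nonpos (hX : ∀ i j, G.Adj i j → X i j ≤ 0) (i j : V) :
    G.adjMatrix R i j * X j i ≤ 0 := by
  by_cases h : G.Adj i j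
  · simpa [h] using hX j i h.symm
  · simp [h]

variable [Fintype V] [IsOrderedRing R]

lemma trace_adjMatrix_mul_nonpos (hX : ∀ i j, G.Adj i j → X i j ≤ 0) :
    trace (G.adjMatrix R * X) ≤ 0 :=
  Finset.sum_nonpos fun i _ => Finset.sum_nonpos fun j _ => G.adjMatrix_mul_apply_nonpos hX i j

lemma eq_zero_of_adj_of_trace_adjMatrix_mul_eq_zero (hX : ∀ i j, G.Adj i j → X i j ≤ 0)
    (htr : trace (G.adjMatrix R * X) = 0) {i j : V} (hij : G.Adj i j) : X i j = 0 := by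
  have hrow := (Finset.sum_eq_zero_iff_of_nonpos fun i _ => Finset.sum_nonpos fun j _ =>
    G.adjMatrix_mul_apply_nonpos hX i j).mp htr j (Finset.mem_univ j)
  simpa [hij.symm] using (Finset.sum_eq_zero_iff_of_nonpos fun k _ =>
    G.adjMatrix_mul_apply_nonpos hX j k).mp hrow i (Finset.mem_univ i)

end AdjMatrix

variable {V κ : Type*} [Fintype V] [DecidableEq V] [Fintype κ] (G : SimpleGraph V)
  [DecidableRel G.Adj] {τ : ℝ}

lemma dotProduct_eq_of_hasStrongArnoldProperty {P : Matrix V κ ℝ}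
    (hpsd : (G.adjMatrix ℝ - τ • 1).PosSemidef) (hAP : G.adjMatrix ℝ * P = τ • P)
    (hSAP : (G.adjMatrix ℝ - τ • 1).HasStrongArnoldProperty G) {η : Type*} [Fintype η]
    (Q : Matrix V η ℝ) (hdiag : ∀ i, Q i ⬝ᵥ Q i = P i ⬝ᵥ P i)
    (hadj : ∀ i j, G.Adj i j → Q i ⬝ᵥ Q j ≤ P i ⬝ᵥ P j) (i j : V) :
    Q i ⬝ᵥ Q j = P i ⬝ᵥ P j := by
  set M := G.adjMatrix ℝ - τ • 1 with hM
  set X := Q * Qᵀ - P * Pᵀ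
  have hXdiag : ∀ i, X i i = 0 := fun i => by simp [X, mul_transpose_apply, hdiag i]
  have hX : ∀ i j, G.Adj i j → X i j ≤ 0 := fun i j h => by
    simpa [X, mul_transpose_apply] using hadj i j h
  have hMP : M * P = 0 := by rw [hM, Matrix.sub_mul, hAP, Matrix.smul_mul, Matrix.one_mul, sub_self]
  have htrX : trace X = 0 := Finset.sum_eq_zero fun i _ => hXdiag i
  have htrMX : trace (M * X) = trace (G.adjMatrix ℝ * X) := by
    rw [hM, Matrix.sub_mul, trace_sub, Matrix.smul_mul, Matrix.one_mul, trace_smul, htrX,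
      smul_zero, sub_zero]
  have htrMQ : trace (M * X) = trace (M * (Q * Qᵀ)) := by
    rw [Matrix.mul_sub, trace_sub, ← Matrix.mul_assoc M P, hMP, Matrix.zero_mul, trace_zero,
      sub_zero]
  have htr : trace (G.adjMatrix ℝ * X) = 0 :=
    le_antisymm (G.trace_adjMatrix_mul_nonpos hX)
      (htrMX ▸ htrMQ ▸ hpsd.trace_mul_mul_transpose_nonneg Q)
  have hMQ : M * Q = 0 :=
    hpsd.mul_eq_zero_of_trace_mul_mul_transpose_eq_zero (htrMQ ▸ htrMX ▸ htr)
  have hMX : M * X = 0 := by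
    rw [Matrix.mul_sub, ← Matrix.mul_assoc, ← Matrix.mul_assoc, hMQ, hMP, Matrix.zero_mul,
      Matrix.zero_mul, sub_zero]
  have hXsymm : X.IsSymm := by simp [X, IsSymm, transpose_sub, transpose_mul]
  have hX0 : X = 0 := hSAP X hXsymm (by
    rintro i j (rfl | hij)
    · exact hXdiag i
    · exact G.eq_zero_of_adj_of_trace_adjMatrix_mul_eq_zero hX htr hij) hMX
  simpa [X, mul_transpose_apply, sub_eq_zero] using congr_fun₂ hX0 i j

lemma isUniversallyCompletable_of_hasStrongArnoldProperty {P : Matrix V κ ℝ}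
    (hpsd : (G.adjMatrix ℝ - τ • 1).PosSemidef) (hAP : G.adjMatrix ℝ * P = τ • P)
    {B S : V → V → Prop} (hBS : ∀ i j, G.Adj i j → B i j ∨ S i j)
    (hSAP : (G.adjMatrix ℝ - τ • 1).HasStrongArnoldProperty G) :
    IsUniversallyCompletable B S P := fun _ q hdiag hB hS =>
  G.dotProduct_eq_of_hasStrongArnoldProperty hpsd hAP hSAP q hdiag fun i j hij =>
    (hBS i j hij).elim (fun h => (hB i j h).le) (hS i j)

lemma hasStrongArnoldProperty_of_isUniversallyCompletable {d : ℕ} {P : Matrix V (Fin d) ℝ}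
    (hP : Pᵀ * P = 1)
    (hspan : ∀ v : V → ℝ, (G.adjMatrix ℝ).mulVec v = τ • v → ∃ w : Fin d → ℝ, P.mulVec w = v)
    {B S : V → V → Prop} (hBS : ∀ i j, B i j ∨ S i j → G.Adj i j)
    (hUC : IsUniversallyCompletable B S P) :
    (G.adjMatrix ℝ - τ • 1).HasStrongArnoldProperty G := by
  intro X hXsymm hX0 hMX
  have hAX : G.adjMatrix ℝ * X = τ • X := by
    rwa [Matrix.sub_mul, Matrix.smul_mul, Matrix.one_mul, sub_eq_zero] at hMX
  have hcol : ∀ j, (G.adjMatrix ℝ).mulVec (Xᵀ j) = τ • Xᵀ j := fun j => by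
    ext i
    simpa [mulVec, dotProduct, mul_apply] using congr_fun₂ hAX i j
  have hPX := mul_transpose_mul_eq_of_forall_exists_mulVec_eq hP fun j => hspan _ (hcol j)
  obtain ⟨ε, hε, Q, hQ⟩ := exists_mul_transpose_eq_add_smul hXsymm hPX
  have hgram : ∀ i j, Q i ⬝ᵥ Q j = P i ⬝ᵥ P j + ε * X i j := fun i j => by
    simpa [mul_transpose_apply] using congr_fun₂ hQ i j
  have hfixed : ∀ i j, (i = j ∨ G.Adj i j) → Q i ⬝ᵥ Q j = P i ⬝ᵥ P j := fun i j h => by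
    rw [hgram, hX0 i j h, mul_zero, add_zero]
  have hQP := hUC d Q (fun i => hfixed i i (.inl rfl))
    (fun i j h => hfixed i j (.inr (hBS i j (.inl h))))
    (fun i j h => (hfixed i j (.inr (hBS i j (.inr h)))).le)
  ext i j
  simpa [hgram, hε.ne'] using hQP i j

end SimpleGraph

theorem stmt_5_general {n d : ℕ} (G : SimpleGraph (Fin n)) [DecidableRel G.Adj] (τ : ℝ)
    (hτpsd : (G.adjMatrix ℝ - τ • 1).PosSemidef)
    (B S : Fin n → Fin n → Prop)
    (hpart : ∀ i j, G.Adj i j ↔ (B i j ∨ S i j))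
    (P : Matrix (Fin n) (Fin d) ℝ)
    (hPortho : Pᵀ * P = 1)
    (hAP : G.adjMatrix ℝ * P = τ • P)
    (hspan : ∀ v : Fin n → ℝ, (G.adjMatrix ℝ).mulVec v = τ • v →
        ∃ w : Fin d → ℝ, P.mulVec w = v) :
    (∀ (m : ℕ) (q : Fin n → Fin m → ℝ),
        (∀ i, q i ⬝ᵥ q i = P i ⬝ᵥ P i) →
        (∀ i j, B i j → q i ⬝ᵥ q j = P i ⬝ᵥ P j) →
        (∀ i j, S i j → q i ⬝ᵥ q j ≤ P i ⬝ᵥ P j) →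
        ∀ i j, q i ⬝ᵥ q j = P i ⬝ᵥ P j)
    ↔
    (∀ X : Matrix (Fin n) (Fin n) ℝ, X.IsSymm →
        (∀ i j, (i = j ∨ G.Adj i j) → X i j = 0) →
        (G.adjMatrix ℝ - τ • 1) * X = 0 →
        X = 0) :=
  ⟨G.hasStrongArnoldProperty_of_isUniversallyCompletable hPortho hspan fun i j => (hpart i j).mpr,
    G.isUniversallyCompletable_of_hasStrongArnoldProperty hτpsd hAP fun i j => (hpart i j).mp⟩

theorem stmt_5 {n d : ℕ} (G : SimpleGraph (Fin n)) [DecidableRel G.Adj] (τ : ℝ)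
    (hτeig : ∃ v : Fin n → ℝ, v ≠ 0 ∧ (G.adjMatrix ℝ).mulVec v = τ • v)
    (hτpsd : (G.adjMatrix ℝ - τ • 1).PosSemidef)
    (B S : Fin n → Fin n → Prop)
    (hBsymm : Symmetric B) (hSsymm : Symmetric S)
    (hpart : ∀ i j, G.Adj i j ↔ (B i j ∨ S i j))
    (hBS : ∀ i j, ¬(B i j ∧ S i j))
    (P : Matrix (Fin n) (Fin d) ℝ)
    (hPortho : Pᵀ * P = 1)
    (hAP : G.adjMatrix ℝ * P = τ • P)
    (hspan : ∀ v : Fin n → ℝ, (G.adjMatrix ℝ).mulVec v = τ • v →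
        ∃ w : Fin d → ℝ, P.mulVec w = v) :
    (∀ (m : ℕ) (q : Fin n → Fin m → ℝ),
        (∀ i, q i ⬝ᵥ q i = P i ⬝ᵥ P i) →
        (∀ i j, B i j → q i ⬝ᵥ q j = P i ⬝ᵥ P j) →
        (∀ i j, S i j → q i ⬝ᵥ q j ≤ P i ⬝ᵥ P j) →
        ∀ i j, q i ⬝ᵥ q j = P i ⬝ᵥ P j)
    ↔
    (∀ X : Matrix (Fin n) (Fin n) ℝ, X.IsSymm →
        (∀ i j, (i = j ∨ G.Adj i j) → X i j = 0) →
        (G.adjMatrix ℝ - τ • 1) * X = 0 →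
        X = 0) :=
  stmt_5_general G τ hτpsd B S hpart P hPortho hAP hspan
end

section
/- Let n = 2k+1 with k ≥ 1 and let C_n be the cycle graph on vertex set ZMod n (x adjacent to y iff x − y = ±1). Then C_n is uniquely vector colorable, with unique optimal vector coloring given by p_x = (cos(2πkx/n), sin(2πkx/n)) ∈ ℝ²: for every m and every family q : ZMod n → ℝ^m with ⟨q_x,q_x⟩ = 1 for all x and ⟨q_x,q_y⟩ ≤ cos(2πk/n) for all adjacent x, y, one has ⟨q_x,q_y⟩ = cos(2πk·((x−y) mod n)/n) for all x, y. -/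
/-!
Put `u i = (-1) ^ i • q (x + i)`. The edge condition says that consecutive `u i` make an angle at
most `π / n`, while `u n = -u 0` makes the angle `π = n * (π / n)` with `u 0`. By the triangle
inequality for angles on the sphere the walk `u 0, u 1, …, u n` is then a geodesic, so the angle
between `u 0` and `u d` is exactly `d * π / n` for every `d ≤ n`.
-/

open Matrix InnerProductGeometry Real

section

variable {V : Type*} [NormedAddCommGroup V] [InnerProductSpace ℝ V]

lemma angle_le_mul_of_angle_succ_le {u : ℕ → V} (hu : ∀ i, u i ≠ 0) {θ : ℝ}
    (h : ∀ i, angle (u i) (u (i + 1)) ≤ θ) (i j : ℕ) :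
    angle (u i) (u (i + j)) ≤ j * θ := by
  induction j with
  | zero => simp [angle_self (hu i)]
  | succ j ih =>
    calc angle (u i) (u (i + (j + 1)))
        ≤ angle (u i) (u (i + j)) + angle (u (i + j)) (u (i + j + 1)) :=
          angle_le_angle_add_angle _ _ _
      _ ≤ j * θ + θ := add_le_add ih (h _)
      _ = ((j + 1 : ℕ) : ℝ) * θ := by push_cast; ring

lemma angle_eq_mul_of_angle_succ_le {u : ℕ → V} (hu : ∀ i, u i ≠ 0) {θ : ℝ}
    (h : ∀ i, angle (u i) (u (i + 1)) ≤ θ) {N : ℕ} (hN : N * θ ≤ angle (u 0) (u N))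
    {j : ℕ} (hj : j ≤ N) : angle (u 0) (u j) = j * θ := by
  refine le_antisymm (by simpa using angle_le_mul_of_angle_succ_le hu h 0 j) ?_
  have hsplit : angle (u 0) (u N) ≤ angle (u 0) (u j) + (N - j : ℕ) * θ :=
    calc angle (u 0) (u N) ≤ angle (u 0) (u j) + angle (u j) (u (j + (N - j))) := by
          rw [Nat.add_sub_cancel' hj]; exact angle_le_angle_add_angle _ _ _
      _ ≤ _ := by gcongr; exact angle_le_mul_of_angle_succ_le hu h j (N - j)
  rw [Nat.cast_sub hj] at hsplit
  linarith

lemma angle_le_of_cos_le_inner {x y : V} (hx : ‖x‖ = 1) (hy : ‖y‖ = 1) {θ : ℝ}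
    (hθ₀ : 0 ≤ θ) (hθπ : θ ≤ π) (h : cos θ ≤ inner ℝ x y) : angle x y ≤ θ := by
  rw [angle, hx, hy, mul_one, div_one, ← arccos_cos hθ₀ hθπ]
  exact arccos_le_arccos h

theorem inner_eq_of_odd_cycle {n : ℕ} [NeZero n] (hn : Odd n) {v : ZMod n → V}
    (hv : ∀ x, ‖v x‖ = 1)
    (hedge : ∀ x, inner ℝ (v x) (v (x + 1)) ≤ -cos (π / n)) (x : ZMod n)
    {d : ℕ} (hd : d ≤ n) :
    inner ℝ (v x) (v (x + d)) = (-1) ^ d * cos (d * (π / n)) := by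
  set u : ℕ → V := fun i => ((-1 : ℝ) ^ i) • v (x + i)
  have hnorm : ∀ i, ‖u i‖ = 1 := fun i => by simp [u, norm_smul, hv]
  have hu : ∀ i, u i ≠ 0 := fun i => norm_ne_zero_iff.1 (by simp [hnorm])
  have hn0 : (n : ℝ) ≠ 0 := by exact_mod_cast NeZero.ne n
  have hθ₀ : 0 ≤ π / n := by positivity
  have hθπ : π / n ≤ π :=
    div_le_self pi_pos.le (by exact_mod_cast Nat.one_le_iff_ne_zero.2 (NeZero.ne n))
  have hstep : ∀ i, angle (u i) (u (i + 1)) ≤ π / n := by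
    intro i
    have : u (i + 1) = ((-1 : ℝ) ^ i) • -v (x + i + 1) := by
      simp [u, pow_succ, add_assoc]
    rw [this, angle_smul_smul (pow_ne_zero _ (by norm_num))]
    refine angle_le_of_cos_le_inner (hv _) (by simpa using hv _) hθ₀ hθπ ?_
    simpa [inner_neg_right] using neg_le_neg (hedge (x + i))
  have hπ : angle (u 0) (u n) = n * (π / n) := by
    have : u n = -u 0 := by simp [u, hn.neg_one_pow]
    rw [this, angle_self_neg_of_nonzero (hu 0)]
    field_simp
  have hangle := angle_eq_mul_of_angle_succ_le hu hstep hπ.ge hd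
  have hcos := inner_eq_cos_angle_of_norm_eq_one (hnorm 0) (hnorm d)
  simp only [u, pow_zero, one_smul, Nat.cast_zero, add_zero, inner_smul_right] at hcos hangle
  rw [hangle] at hcos
  rw [← hcos, ← mul_assoc, ← mul_pow]
  norm_num

end

theorem stmt_16_general (k : ℕ)
    (m : ℕ) (q : ZMod (2 * k + 1) → Fin m → ℝ)
    (hunit : ∀ x, q x ⬝ᵥ q x = 1)
    (hedge : ∀ x y : ZMod (2 * k + 1), (x - y = 1 ∨ x - y = -1) →
        q x ⬝ᵥ q y ≤ Real.cos (2 * Real.pi * k / (2 * k + 1))) :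
    ∀ x y : ZMod (2 * k + 1),
      q x ⬝ᵥ q y = Real.cos (2 * Real.pi * k * ((x - y).val) / (2 * k + 1)) := by
  intro x y
  let v : ZMod (2 * k + 1) → EuclideanSpace ℝ (Fin m) := fun x => WithLp.toLp 2 (q x)
  have hinner : ∀ x y, inner ℝ (v x) (v y) = q y ⬝ᵥ q x := fun x y => by
    simp [v, EuclideanSpace.inner_toLp_toLp]
  have hcos : cos (2 * π * k / (2 * k + 1)) = -cos (π / (2 * k + 1 : ℕ)) := by
    rw [← cos_pi_sub]
    congr 1
    field_simp
    push_cast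
    ring
  have key := inner_eq_of_odd_cycle (odd_two_mul_add_one k) (v := v)
    (fun x => by rw [norm_eq_sqrt_real_inner, hinner, hunit, sqrt_one])
    (fun x => by rw [hinner, ← hcos]; exact hedge _ _ (Or.inl (by ring))) y
    (ZMod.val_lt (x - y)).le
  rw [ZMod.natCast_zmod_val, add_sub_cancel, hinner] at key
  rw [key, ← cos_nat_mul_pi_sub]
  congr 1
  field_simp
  push_cast
  ring

theorem stmt_16 (k : ℕ) (hk : 1 ≤ k)
    (m : ℕ) (q : ZMod (2 * k + 1) → Fin m → ℝ)
    (hunit : ∀ x, q x ⬝ᵥ q x = 1)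
    (hedge : ∀ x y : ZMod (2 * k + 1), (x - y = 1 ∨ x - y = -1) →
        q x ⬝ᵥ q y ≤ Real.cos (2 * Real.pi * k / (2 * k + 1))) :
    ∀ x y : ZMod (2 * k + 1),
      q x ⬝ᵥ q y = Real.cos (2 * Real.pi * k * ((x - y).val) / (2 * k + 1)) :=
  stmt_16_general k m q hunit hedge
end

section
/- Let G be a 1-walk-regular simple graph on vertex set Fin n with adjacency matrix A (there exist reals (a_k), (b_k) with (A^k)_{ii} = a_k for all vertices i and (A^k)_{ij} = b_k for all edges ij, for every k ∈ ℕ), r-regular with r ≥ 1. Let τ be the least eigenvalue of A and let P be an n×d matrix with PᵀP = I_d, AP = τP, and every v with Av = τv lying in the column space of P; let p_1,…,p_n be the rows of P. Then G is uniquely vector colorable — i.e., for every m, every q : Fin n → ℝ^m with ⟨q_i,q_i⟩ = 1 for all i and ⟨q_i,q_j⟩ ≤ τ/r for all edges satisfies Gram(q) = (n/d)·P·Pᵀ — if and only if the only symmetric d×d real matrix R satisfying p_iᵀ R p_j = 0 whenever i = j or i ∼ j is R = 0. -/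
/-!
Let `E = P Pᵀ`, the orthogonal projection onto the `τ`-eigenspace of `A`. Being a spectral
projection, `E` is a polynomial in `A`, so 1-walk-regularity makes its diagonal and its entries on
edges constant; `tr E = d` and `A E = τ E` then force the values `d / n` and `τ d / (n r)`, so
`(n / d) E` is the Gram matrix of an optimal vector coloring.

If `M` is the Gram matrix of any optimal coloring, then `tr ((A - τ) M)` is `≥ 0` because both
factors are positive semidefinite, and `≤ 0` by the edge bound and regularity; so `(A - τ) M = 0`
and the edge bound is tight. Hence `M = E M E = P S Pᵀ` with `S = Pᵀ M P`, and `S - (n / d) I` is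
an admissible `R`. Conversely, an admissible `R ≠ 0` gives, for small `ε > 0`, a factorization
`(n / d) I + ε R = Cᵀ C`, and the rows of `P Cᵀ` form an optimal coloring with Gram matrix
`(n / d) E + ε P R Pᵀ ≠ (n / d) E`.
-/

open Matrix Polynomial Finset

namespace Matrix

variable {ι κ ν : Type*} [Fintype κ]

lemma mul_mul_transpose_apply {R : Type*} [CommSemiring R] (P : Matrix ι κ R)
    (S : Matrix κ κ R) (i j : ι) : (P * S * Pᵀ) i j = P i ⬝ᵥ S *ᵥ P j := by
  simp only [mul_apply, transpose_apply, dotProduct, mulVec, Finset.sum_mul, Finset.mul_sum]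
  rw [Finset.sum_comm]
  simp only [mul_assoc]

variable [Fintype ι] [DecidableEq κ]

lemma mul_transpose_mul_eq_self_of_mul_eq_smul [Fintype ν] {A : Matrix ι ι ℝ} {τ : ℝ}
    {P : Matrix ι κ ℝ} (hP : Pᵀ * P = 1)
    (hspan : ∀ v : ι → ℝ, A *ᵥ v = τ • v → ∃ w : κ → ℝ, P *ᵥ w = v)
    {X : Matrix ι ν ℝ} (hX : A * X = τ • X) : P * Pᵀ * X = X := by
  have hcol : ∀ j, A *ᵥ (fun i => X i j) = τ • fun i => X i j := fun j => by
    ext i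
    simpa [mulVec, dotProduct, mul_apply] using congrFun (congrFun hX i) j
  choose W hW using fun j => hspan _ (hcol j)
  have hXW : X = P * Matrix.of fun k j => W j k := by
    ext i j
    rw [← congrFun (hW j) i]
    rfl
  rw [hXW, ← Matrix.mul_assoc, Matrix.mul_assoc P, hP, Matrix.mul_one]

lemma mul_transpose_apply_self_eq_card_div_card {P : Matrix ι κ ℝ} (hP : Pᵀ * P = 1)
    (hconst : ∀ i j, (P * Pᵀ) i i = (P * Pᵀ) j j) (i : ι) :
    (P * Pᵀ) i i = Fintype.card κ / Fintype.card ι := by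
  have htrace : (Fintype.card ι : ℝ) * (P * Pᵀ) i i = Fintype.card κ := by
    calc (Fintype.card ι : ℝ) * (P * Pᵀ) i i = (P * Pᵀ).trace := by
          simp only [trace, diag, hconst _ i, sum_const, card_univ, nsmul_eq_mul]
      _ = Fintype.card κ := by rw [trace_mul_comm, hP, trace_one]
  have hι : (Fintype.card ι : ℝ) ≠ 0 := Nat.cast_ne_zero.mpr (Fintype.card_pos_iff.mpr ⟨i⟩).ne'
  rw [← htrace, mul_div_cancel_left₀ _ hι]

section SpectralProjection

variable [DecidableEq ι]

lemma IsSymm.mul_eq_zero_of_pow_mul_eq_zero [Fintype ν] {B : Matrix ι ι ℝ} (hB : B.IsSymm)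
    {X : Matrix ι ν ℝ} {s : ℕ} (h : B ^ s * X = 0) : B * X = 0 := by
  induction s generalizing X with
  | zero => rw [pow_zero, Matrix.one_mul] at h; rw [h, Matrix.mul_zero]
  | succ s ih =>
    rw [pow_succ, Matrix.mul_assoc] at h
    have hBBX : B * (B * X) = 0 := ih h
    rw [← trace_conjTranspose_mul_self_eq_zero_iff, conjTranspose_mul,
      conjTranspose_eq_transpose_of_trivial B, hB.eq, Matrix.mul_assoc, hBBX,
      Matrix.mul_zero, trace_zero]

lemma IsSymm.aeval {R : Type*} [CommSemiring R] {A : Matrix ι ι R} (hA : A.IsSymm) (p : R[X]) :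
    (aeval A p).IsSymm := by
  simp only [IsSymm, aeval_eq_sum_range, transpose_sum, transpose_smul, transpose_pow, hA.eq]

lemma aeval_apply_eq_of_forall_pow_apply_eq {R : Type*} [CommSemiring R] {A : Matrix ι ι R}
    (p : R[X]) {i j i' j' : ι} (h : ∀ k : ℕ, (A ^ k) i j = (A ^ k) i' j') :
    aeval A p i j = aeval A p i' j' := by
  simp only [aeval_eq_sum_range, sum_apply, smul_apply, h]

lemma aeval_mul_eq_eval_smul {R : Type*} [CommSemiring R] [Fintype ν] {A : Matrix ι ι R}
    {τ : R} {X : Matrix ι ν R} (hAX : A * X = τ • X) (p : R[X]) :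
    aeval A p * X = p.eval τ • X := by
  have hpow : ∀ k : ℕ, A ^ k * X = τ ^ k • X := by
    intro k
    induction k with
    | zero => simp
    | succ k ih =>
      rw [pow_succ', Matrix.mul_assoc, ih, Matrix.mul_smul, hAX, smul_smul, pow_succ]
  simp only [aeval_eq_sum_range, eval_eq_sum_range, Matrix.sum_mul, Matrix.smul_mul, hpow,
    smul_smul, ← Finset.sum_smul]

/-- Write `charpoly A = (X - τ) ^ s * h` with `h τ ≠ 0`. By Cayley–Hamilton the columns of `h(A)`
lie in the kernel of `(A - τ) ^ s`, which for symmetric `A` is the `τ`-eigenspace; so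
`P Pᵀ h(A) = h(A)`, while `h(A) P Pᵀ = h(τ) P Pᵀ`, and transposing gives `h(A) = h(τ) P Pᵀ`. -/
theorem exists_aeval_eq_mul_transpose {A : Matrix ι ι ℝ} (hA : A.IsSymm) {τ : ℝ}
    {P : Matrix ι κ ℝ} (hP : Pᵀ * P = 1) (hAP : A * P = τ • P)
    (hspan : ∀ v : ι → ℝ, A *ᵥ v = τ • v → ∃ w : κ → ℝ, P *ᵥ w = v) :
    ∃ p : ℝ[X], aeval A p = P * Pᵀ := by
  obtain ⟨h, hfactor, hndvd⟩ :=
    A.charpoly.exists_eq_pow_rootMultiplicity_mul_and_not_dvd A.charpoly_monic.ne_zero τ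
  have hhτ : h.eval τ ≠ 0 := fun H => hndvd (dvd_iff_isRoot.mpr H)
  have hker : (A - τ • 1) ^ A.charpoly.rootMultiplicity τ * aeval A h = 0 := by
    have hCH := A.aeval_self_charpoly
    rwa [hfactor, map_mul, map_pow, map_sub, aeval_X, aeval_C,
      Algebra.algebraMap_eq_smul_one] at hCH
  have hAH : A * aeval A h = τ • aeval A h := by
    have hsymm : (A - τ • 1).IsSymm := by
      rw [IsSymm, transpose_sub, transpose_smul, transpose_one, hA.eq]
    have h0 := hsymm.mul_eq_zero_of_pow_mul_eq_zero hker
    rwa [Matrix.sub_mul, Matrix.smul_mul, Matrix.one_mul, sub_eq_zero] at h0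
  have hEH : P * Pᵀ * aeval A h = aeval A h :=
    mul_transpose_mul_eq_self_of_mul_eq_smul hP hspan hAH
  have hHE : aeval A h * (P * Pᵀ) = h.eval τ • (P * Pᵀ) := by
    rw [← Matrix.mul_assoc, aeval_mul_eq_eval_smul hAP, Matrix.smul_mul]
  have hH : aeval A h = h.eval τ • (P * Pᵀ) := by
    have hPsymm : (P * Pᵀ).IsSymm := by rw [IsSymm, transpose_mul, transpose_transpose]
    rw [← hHE, ← (hA.aeval h).eq, ← hPsymm.eq, ← transpose_mul, hEH]
  refine ⟨C (h.eval τ)⁻¹ * h, ?_⟩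
  rw [map_mul, aeval_C, hH, Algebra.algebraMap_eq_smul_one, Matrix.smul_mul, Matrix.one_mul,
    smul_smul, inv_mul_cancel₀ hhτ, one_smul]

end SpectralProjection

section PosSemidef

open scoped MatrixOrder

lemma trace_conjTranspose_mul_self_mul_mul_transpose [Fintype ν] (C : Matrix ι ι ℝ)
    (Q : Matrix ι ν ℝ) : (Cᴴ * C * (Q * Qᵀ)).trace = (C * Q * (C * Q)ᴴ).trace := by
  rw [conjTranspose_mul, conjTranspose_eq_transpose_of_trivial Q, Matrix.mul_assoc,
    trace_mul_comm]
  simp only [Matrix.mul_assoc]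

variable [DecidableEq ι]

lemma PosSemidef.trace_mul_mul_transpose_nonneg_s19 [Fintype ν] {B : Matrix ι ι ℝ}
    (hB : B.PosSemidef) (Q : Matrix ι ν ℝ) : 0 ≤ (B * (Q * Qᵀ)).trace := by
  obtain ⟨C, rfl⟩ := CStarAlgebra.nonneg_iff_eq_star_mul_self.mp hB.nonneg
  rw [star_eq_conjTranspose, trace_conjTranspose_mul_self_mul_mul_transpose]
  exact (posSemidef_self_mul_conjTranspose _).trace_nonneg

lemma PosSemidef.mul_eq_zero_of_trace_mul_mul_transpose_eq_zero_s19 [Fintype ν] {B : Matrix ι ι ℝ}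
    (hB : B.PosSemidef) {Q : Matrix ι ν ℝ} (h : (B * (Q * Qᵀ)).trace = 0) : B * Q = 0 := by
  obtain ⟨C, rfl⟩ := CStarAlgebra.nonneg_iff_eq_star_mul_self.mp hB.nonneg
  rw [star_eq_conjTranspose, trace_conjTranspose_mul_self_mul_mul_transpose,
    trace_mul_conjTranspose_self_eq_zero_iff] at h
  rw [star_eq_conjTranspose, Matrix.mul_assoc, h, Matrix.mul_zero]

end PosSemidef

lemma IsHermitian.exists_posSemidef_smul_one_add_smul {R : Matrix κ κ ℝ} (hR : R.IsHermitian)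
    {α : ℝ} (hα : 0 < α) : ∃ ε : ℝ, 0 < ε ∧ (α • 1 + ε • R).PosSemidef := by
  set c := ∑ i, |hR.eigenvalues i|
  set ε := α / (c + 1)
  have hc : 0 ≤ c := Finset.sum_nonneg fun i _ => abs_nonneg _
  refine ⟨ε, by positivity, ?_⟩
  set U : Matrix κ κ ℝ := (hR.eigenvectorUnitary : Matrix κ κ ℝ)
  have hdecomp : α • 1 + ε • R = U * diagonal (fun i => α + ε * hR.eigenvalues i) * Uᴴ := by
    have hdiag : diagonal (fun i => α + ε * hR.eigenvalues i) =
        α • 1 + ε • diagonal (RCLike.ofReal ∘ hR.eigenvalues) := by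
      ext i j
      by_cases h : i = j <;> simp [h]
    conv_lhs => rw [hR.spectral_theorem, Unitary.conjStarAlgAut_apply]
    rw [hdiag, Matrix.mul_add, Matrix.add_mul, Matrix.mul_smul, Matrix.mul_smul, Matrix.smul_mul,
      Matrix.smul_mul, Matrix.mul_one, ← star_eq_conjTranspose,
      Unitary.mul_star_self_of_mem hR.eigenvectorUnitary.2]
  rw [hdecomp]
  refine PosSemidef.mul_mul_conjTranspose_same (posSemidef_diagonal_iff.mpr fun i => ?_) U
  have hle : |hR.eigenvalues i| ≤ c :=
    Finset.single_le_sum (f := fun i => |hR.eigenvalues i|) (fun i _ => abs_nonneg _)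
      (Finset.mem_univ i)
  have hεle : ε * |hR.eigenvalues i| ≤ α := by
    rw [div_mul_eq_mul_div, div_le_iff₀ (by positivity)]
    nlinarith
  nlinarith [neg_abs_le (hR.eigenvalues i), (by positivity : 0 < ε)]

open scoped MatrixOrder in
theorem eq_zero_of_forall_mul_transpose_eq_smul {P : Matrix ι κ ℝ} (hP : Pᵀ * P = 1)
    {α : ℝ} (hα : 0 < α) (S : ι → ι → Prop)
    (hrigid : ∀ Q : Matrix ι κ ℝ, (∀ i j, S i j → (Q * Qᵀ) i j = α * (P * Pᵀ) i j) →
      Q * Qᵀ = α • (P * Pᵀ))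
    {R : Matrix κ κ ℝ} (hR : R.IsSymm) (hRP : ∀ i j, S i j → P i ⬝ᵥ R *ᵥ P j = 0) : R = 0 := by
  obtain ⟨ε, hε, hpsd⟩ := (isHermitian_iff_isSymm.mpr hR).exists_posSemidef_smul_one_add_smul hα
  obtain ⟨C, hC⟩ := CStarAlgebra.nonneg_iff_eq_star_mul_self.mp hpsd.nonneg
  have hgram : P * Cᵀ * (P * Cᵀ)ᵀ = α • (P * Pᵀ) + ε • (P * R * Pᵀ) := by
    calc P * Cᵀ * (P * Cᵀ)ᵀ = P * (Cᵀ * C) * Pᵀ := by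
          simp only [transpose_mul, transpose_transpose, Matrix.mul_assoc]
      _ = P * (α • 1 + ε • R) * Pᵀ := by
          rw [hC, star_eq_conjTranspose, conjTranspose_eq_transpose_of_trivial]
      _ = α • (P * Pᵀ) + ε • (P * R * Pᵀ) := by
          rw [Matrix.mul_add, Matrix.add_mul, Matrix.mul_smul, Matrix.mul_smul, Matrix.mul_one,
            Matrix.smul_mul, Matrix.smul_mul]
  have hPRP : P * R * Pᵀ = 0 := by
    have hQ := hrigid (P * Cᵀ) fun i j hij => by
      rw [hgram, add_apply, smul_apply, smul_apply, mul_mul_transpose_apply, hRP i j hij,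
        smul_zero, add_zero, smul_eq_mul]
    rw [hgram, add_eq_left, smul_eq_zero] at hQ
    exact hQ.resolve_left hε.ne'
  calc R = Pᵀ * P * R * (Pᵀ * P) := by rw [hP, Matrix.one_mul, Matrix.mul_one]
    _ = Pᵀ * (P * R * Pᵀ) * P := by simp only [Matrix.mul_assoc]
    _ = 0 := by rw [hPRP, Matrix.mul_zero, Matrix.zero_mul]

theorem eq_smul_mul_transpose_of_forall_isSymm_eq_zero {P : Matrix ι κ ℝ} (α : ℝ)
    (S : ι → ι → Prop)
    (hrigid : ∀ R : Matrix κ κ ℝ, R.IsSymm → (∀ i j, S i j → P i ⬝ᵥ R *ᵥ P j = 0) → R = 0)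
    {M : Matrix ι ι ℝ} (hM : M.IsSymm) (hPM : P * Pᵀ * M = M)
    (hMP : ∀ i j, S i j → M i j = α * (P * Pᵀ) i j) : M = α • (P * Pᵀ) := by
  have hME : M * (P * Pᵀ) = M := by
    conv_rhs => rw [← hM.eq, ← hPM]
    rw [transpose_mul, hM.eq, transpose_mul, transpose_transpose]
  have hPRP : P * (Pᵀ * M * P - α • 1) * Pᵀ = M - α • (P * Pᵀ) := by
    rw [Matrix.mul_sub, Matrix.sub_mul, Matrix.mul_smul, Matrix.smul_mul, Matrix.mul_one]
    congr 1
    simp only [← Matrix.mul_assoc] at hME ⊢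
    rw [hPM, hME]
  have hR0 := hrigid (Pᵀ * M * P - α • 1) (by
      rw [IsSymm, transpose_sub, transpose_smul, transpose_one, transpose_mul, transpose_mul,
        transpose_transpose, hM.eq, Matrix.mul_assoc]) fun i j hij => by
    rw [← mul_mul_transpose_apply, hPRP, sub_apply, smul_apply, hMP i j hij, smul_eq_mul,
      sub_self]
  rwa [hR0, Matrix.mul_zero, Matrix.zero_mul, eq_comm, sub_eq_zero] at hPRP

end Matrix

namespace SimpleGraph

variable {V : Type*} [Fintype V] {G : SimpleGraph V} [DecidableRel G.Adj] {r : ℕ}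

lemma IsRegularOfDegree.apply_eq_of_adj (hreg : G.IsRegularOfDegree r) (hr : r ≠ 0) {τ : ℝ}
    {E : Matrix V V ℝ} (hAE : G.adjMatrix ℝ * E = τ • E)
    (hconst : ∀ i j i' j', G.Adj i j → G.Adj i' j' → E i j = E i' j') {i j : V}
    (hij : G.Adj i j) : E i j = τ * E i i / r := by
  have hii := congrFun (congrFun hAE i) i
  rw [adjMatrix_mul_apply, sum_congr rfl fun k hk => hconst k i i j
      ((mem_neighborFinset G i k).mp hk).symm hij, sum_const, card_neighborFinset_eq_degree,
    hreg i, nsmul_eq_mul, Matrix.smul_apply, smul_eq_mul] at hii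
  rw [← hii]
  field_simp

variable [DecidableEq V]

lemma IsRegularOfDegree.trace_adjMatrix_sub_smul_mul (hreg : G.IsRegularOfDegree r) (hr : r ≠ 0)
    (τ : ℝ) {M : Matrix V V ℝ} (hM : ∀ i, M i i = 1) :
    ((G.adjMatrix ℝ - τ • 1) * M).trace = ∑ i, ∑ k ∈ G.neighborFinset i, (M k i - τ / r) := by
  rw [Matrix.sub_mul, trace_sub, Matrix.smul_mul, Matrix.one_mul, trace_smul, smul_eq_mul,
    trace, trace, mul_sum, ← sum_sub_distrib]
  refine sum_congr rfl fun i _ => ?_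
  rw [diag_apply, diag_apply, adjMatrix_mul_apply, sum_sub_distrib, sum_const,
    card_neighborFinset_eq_degree, hreg i, hM i, nsmul_eq_mul]
  field_simp

theorem IsRegularOfDegree.adjMatrix_mul_eq_smul_of_dotProduct_le {ν : Type*} [Fintype ν]
    (hreg : G.IsRegularOfDegree r) (hr : r ≠ 0) {τ : ℝ}
    (hτ : (G.adjMatrix ℝ - τ • 1).PosSemidef) (Q : Matrix V ν ℝ) (hQ1 : ∀ i, Q i ⬝ᵥ Q i = 1)
    (hQ : ∀ i j, G.Adj i j → Q i ⬝ᵥ Q j ≤ τ / r) :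
    G.adjMatrix ℝ * (Q * Qᵀ) = τ • (Q * Qᵀ) ∧ ∀ i j, G.Adj i j → Q i ⬝ᵥ Q j = τ / r := by
  have htrace := hreg.trace_adjMatrix_sub_smul_mul hr τ (M := Q * Qᵀ) hQ1
  have hterm : ∀ i, ∀ k ∈ G.neighborFinset i, (Q * Qᵀ) k i - τ / r ≤ 0 := fun i k hk =>
    sub_nonpos.mpr (hQ k i ((mem_neighborFinset G i k).mp hk).symm)
  have hsum : ∀ i ∈ univ, ∑ k ∈ G.neighborFinset i, ((Q * Qᵀ) k i - τ / r) ≤ 0 :=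
    fun i _ => sum_nonpos (hterm i)
  have hzero : ((G.adjMatrix ℝ - τ • 1) * (Q * Qᵀ)).trace = 0 :=
    le_antisymm (htrace ▸ sum_nonpos hsum) (hτ.trace_mul_mul_transpose_nonneg_s19 Q)
  refine ⟨?_, fun i j hij => ?_⟩
  · have hBQ := hτ.mul_eq_zero_of_trace_mul_mul_transpose_eq_zero_s19 hzero
    rw [← sub_eq_zero, ← Matrix.one_mul (Q * Qᵀ), ← Matrix.smul_mul, Matrix.one_mul,
      ← Matrix.sub_mul, ← Matrix.mul_assoc, hBQ, Matrix.zero_mul]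
  · rw [htrace, sum_eq_zero_iff_of_nonpos hsum] at hzero
    have hj := (sum_eq_zero_iff_of_nonpos (hterm j)).mp (hzero j (mem_univ j)) i
      ((mem_neighborFinset G j i).mpr hij.symm)
    exact sub_eq_zero.mp hj

section WalkRegular

variable {κ : Type*} [Fintype κ] {P : Matrix V κ ℝ} {p : ℝ[X]}

lemma mul_transpose_apply_self_of_walkRegular [DecidableEq κ] (a : ℕ → ℝ)
    (hwalk : ∀ (k : ℕ) (i : V), (G.adjMatrix ℝ ^ k) i i = a k) (hP : Pᵀ * P = 1)
    (hp : aeval (G.adjMatrix ℝ) p = P * Pᵀ) (i : V) :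
    (P * Pᵀ) i i = Fintype.card κ / Fintype.card V :=
  mul_transpose_apply_self_eq_card_div_card hP (fun i j => by
    simpa only [hp] using aeval_apply_eq_of_forall_pow_apply_eq p fun k =>
      (hwalk k i).trans (hwalk k j).symm) i

lemma IsRegularOfDegree.mul_transpose_apply_of_walkRegular (hreg : G.IsRegularOfDegree r)
    (hr : r ≠ 0) (b : ℕ → ℝ)
    (hwalk : ∀ (k : ℕ) (i j : V), G.Adj i j → (G.adjMatrix ℝ ^ k) i j = b k)
    {τ : ℝ} (hAP : G.adjMatrix ℝ * P = τ • P) (hp : aeval (G.adjMatrix ℝ) p = P * Pᵀ) {i j : V}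
    (hij : G.Adj i j) : (P * Pᵀ) i j = τ * (P * Pᵀ) i i / r :=
  hreg.apply_eq_of_adj hr (by rw [← Matrix.mul_assoc, hAP, Matrix.smul_mul])
    (fun i j i' j' h h' => by
      simpa only [hp] using aeval_apply_eq_of_forall_pow_apply_eq p fun k =>
        (hwalk k i j h).trans (hwalk k i' j' h').symm) hij

end WalkRegular

end SimpleGraph

theorem stmt_19 {n d : ℕ} (G : SimpleGraph (Fin n)) [DecidableRel G.Adj]
    (a b : ℕ → ℝ)
    (hwalk1 : ∀ (k : ℕ) (i : Fin n), ((G.adjMatrix ℝ) ^ k) i i = a k)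
    (hwalk2 : ∀ (k : ℕ) (i j : Fin n), G.Adj i j → ((G.adjMatrix ℝ) ^ k) i j = b k)
    (r : ℕ) (hr : 1 ≤ r) (hreg : G.IsRegularOfDegree r)
    (τ : ℝ)
    (hτeig : ∃ v : Fin n → ℝ, v ≠ 0 ∧ (G.adjMatrix ℝ).mulVec v = τ • v)
    (hτpsd : (G.adjMatrix ℝ - τ • 1).PosSemidef)
    (P : Matrix (Fin n) (Fin d) ℝ)
    (hPortho : Pᵀ * P = 1)
    (hAP : G.adjMatrix ℝ * P = τ • P)
    (hspan : ∀ v : Fin n → ℝ, (G.adjMatrix ℝ).mulVec v = τ • v →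
        ∃ w : Fin d → ℝ, P.mulVec w = v) :
    (∀ (m : ℕ) (q : Fin n → Fin m → ℝ),
        (∀ i, q i ⬝ᵥ q i = 1) →
        (∀ i j, G.Adj i j → q i ⬝ᵥ q j ≤ τ / r) →
        Matrix.of (fun i j => q i ⬝ᵥ q j) = ((n : ℝ) / d) • (P * Pᵀ))
    ↔
    (∀ R : Matrix (Fin d) (Fin d) ℝ, R.IsSymm →
        (∀ i j, (i = j ∨ G.Adj i j) → P i ⬝ᵥ R.mulVec (P j) = 0) →
        R = 0) := by
  obtain ⟨v, hv0, hv⟩ := hτeig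
  obtain ⟨i₀, -⟩ := Function.ne_iff.mp hv0
  have hd : 0 < d := Nat.pos_of_ne_zero fun hd => hv0 <| by
    subst hd
    obtain ⟨w, rfl⟩ := hspan v hv
    ext i
    simp [mulVec, dotProduct]
  have hr0 : r ≠ 0 := by omega
  obtain ⟨p, hp⟩ := exists_aeval_eq_mul_transpose G.isSymm_adjMatrix hPortho hAP hspan
  have hdiag (i : Fin n) : (n / d : ℝ) * (P * Pᵀ) i i = 1 := by
    have hn : (n : ℝ) ≠ 0 := by exact_mod_cast i.pos.ne'
    rw [SimpleGraph.mul_transpose_apply_self_of_walkRegular a hwalk1 hPortho hp i, Fintype.card_fin,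
      Fintype.card_fin]
    field_simp
  have hedge (i j : Fin n) (hij : G.Adj i j) : (n / d : ℝ) * (P * Pᵀ) i j = τ / r := by
    rw [hreg.mul_transpose_apply_of_walkRegular hr0 b hwalk2 hAP hp hij]
    linear_combination τ / r * hdiag i
  constructor
  · intro hU R hR hRP
    have hα : (0 : ℝ) < n / d := by have := i₀.pos; positivity
    refine eq_zero_of_forall_mul_transpose_eq_smul hPortho hα (fun i j => i = j ∨ G.Adj i j)
      (fun Q hQ => hU d Q (fun i => (hQ i i (.inl rfl)).trans (hdiag i))
        fun i j hij => ((hQ i j (.inr hij)).trans (hedge i j hij)).le) hR hRP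
  · intro hR m q hq1 hqe
    obtain ⟨hAM, hqe'⟩ := hreg.adjMatrix_mul_eq_smul_of_dotProduct_le hr0 hτpsd q hq1 hqe
    refine eq_smul_mul_transpose_of_forall_isSymm_eq_zero (M := of q * (of q)ᵀ) _ _ hR
      (by rw [IsSymm, transpose_mul, transpose_transpose])
      (mul_transpose_mul_eq_self_of_mul_eq_smul hPortho hspan hAM) ?_
    rintro i j (rfl | hij)
    · exact (hq1 i).trans (hdiag i).symm
    · exact (hqe' i j hij).trans (hedge i j hij).symm
end
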